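/- Let w_0 be the longest element of W and w_{0,J} the longest element of W_J. Let w_1 ∈ W^J and set w_2 = w_0·w_{0,J}·w_1^{-1}, and assume ℓ(w_2) + ℓ(w_1) = ℓ(w_0·w_{0,J}). Then Φ_- ∩ w_2^{-1}(Φ_+) = w_1(Φ_- \ Φ_{-J}) ∩ Φ_-. -/

import Mathlib

open Pointwise
open scoped Classical

/-- A finite crystallographic root system in a real vector space `V`, equipped with a base:
a set of simple roots `S`, together with the corresponding set of positive roots `Φ₊`
(every positive root being a nonnegative integer combination of the simple roots), so that
the set of roots is the disjoint union `Φ = Φ₊ ⊔ (-Φ₊)`. -/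
structure BasedRootSystem (V : Type*) [AddCommGroup V] [Module ℝ V] where
  /-- The set `Φ` of roots. -/
  roots : Set V
  finite_roots : roots.Finite
  zero_not_mem_roots : (0 : V) ∉ roots
  span_roots : Submodule.span ℝ roots = ⊤
  /-- The coroot `α∨` (a linear functional on `V`) associated to each root `α`. -/
  coroot : V → Module.Dual ℝ V
  coroot_self_eq_two : ∀ α ∈ roots, coroot α α = 2
  /-- The root system is crystallographic. -/
  crystallographic : ∀ α ∈ roots, ∀ β ∈ roots, ∃ n : ℤ, coroot α β = (n : ℝ)
  /-- Root reflections permute the roots. -/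
  reflect_mem : ∀ α ∈ roots, ∀ β ∈ roots, β - coroot α β • α ∈ roots
  /-- The set `Φ₊` of positive roots. -/
  pos : Set V
  pos_subset_roots : pos ⊆ roots
  /-- `Φ = Φ₊ ∪ Φ₋` where `Φ₋ = -Φ₊`. -/
  roots_eq_pos_union_neg : roots = pos ∪ (-pos)
  disjoint_pos_neg : Disjoint pos (-pos)
  /-- The set `S` of simple roots. -/
  simple : Set V
  simple_subset_pos : simple ⊆ pos
  simple_linearIndependent : LinearIndependent ℝ (fun α : simple => (α : V))
  /-- Every positive root is a nonnegative integer combination of simple roots. -/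
  pos_eq_nat_combination :
    ∀ α ∈ pos, ∃ c : V →₀ ℕ, (c.support : Set V) ⊆ simple ∧
      α = c.sum fun β n => (n : ℝ) • β

namespace BasedRootSystem

variable {V : Type*} [AddCommGroup V] [Module ℝ V] (P : BasedRootSystem V)

/-- The set `Φ₋` of negative roots. -/
def neg : Set V := -P.pos

/-- The reflection `s_α` in a root `α` (interpreted as the identity if `α` is not a root). -/
noncomputable def srefl (α : V) : V ≃ₗ[ℝ] V :=
  if h : α ∈ P.roots then Module.reflection (P.coroot_self_eq_two α h) else 1

/-- The Weyl group `W`, generated by the simple reflections `{s_α : α ∈ S}`. -/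
noncomputable def weylGroup : Subgroup (V ≃ₗ[ℝ] V) :=
  Subgroup.closure (P.srefl '' P.simple)

/-- The standard parabolic subgroup `W_J`, generated by `{s_α : α ∈ J}`. -/
noncomputable def parabolic (J : Set V) : Subgroup (V ≃ₗ[ℝ] V) :=
  Subgroup.closure (P.srefl '' J)

/-- The length `ℓ(w)`: the minimal number of simple reflections needed to express `w`. -/
noncomputable def length (w : V ≃ₗ[ℝ] V) : ℕ :=
  sInf {n | ∃ l : List V, l.length = n ∧ (∀ α ∈ l, α ∈ P.simple) ∧ w = (l.map P.srefl).prod}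

/-- `w ∈ W^J`: `w` lies in `W` and has minimal length in its coset `w • W_J`. -/
noncomputable def IsMinCosetRep (J : Set V) (w : V ≃ₗ[ℝ] V) : Prop :=
  w ∈ P.weylGroup ∧ ∀ u ∈ P.parabolic J, P.length w ≤ P.length (w * u)

/-- `Φ_J`: the positive roots lying in the `ℤ`-span of `J`. -/
def posOf (J : Set V) : Set V := {α ∈ P.pos | α ∈ Submodule.span ℤ J}

/-- `Φ_{-J} = -Φ_J`. -/
def negOf (J : Set V) : Set V := -(P.posOf J)

/-- `w` is the longest element of the subgroup `H` (of maximal Coxeter length in `H`). -/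
noncomputable def IsLongestIn (H : Subgroup (V ≃ₗ[ℝ] V)) (w : V ≃ₗ[ℝ] V) : Prop :=
  w ∈ H ∧ ∀ u ∈ H, P.length u ≤ P.length w

end BasedRootSystem

namespace BasedRootSystem

variable {V : Type*} [AddCommGroup V] [Module ℝ V] (P : BasedRootSystem V)

/-! ### Basic facts about roots, positives and negatives -/

lemma neg_subset_roots : P.neg ⊆ P.roots := by
  intro x hx
  rw [P.roots_eq_pos_union_neg]
  exact Or.inr hx

lemma root_ne_zero {α : V} (h : α ∈ P.roots) : α ≠ 0 :=
  fun e => P.zero_not_mem_roots (e ▸ h)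

lemma mem_neg {x : V} : x ∈ P.neg ↔ -x ∈ P.pos := Set.mem_neg

lemma not_mem_neg_of_pos {x : V} (hx : x ∈ P.pos) : x ∉ P.neg :=
  Set.disjoint_left.mp P.disjoint_pos_neg hx

lemma simple_subset_roots : P.simple ⊆ P.roots :=
  fun _ h => P.pos_subset_roots (P.simple_subset_pos h)

lemma root_pos_or_neg {x : V} (hx : x ∈ P.roots) : x ∈ P.pos ∨ x ∈ P.neg := by
  rw [P.roots_eq_pos_union_neg] at hx
  exact hx

/-! ### The basis of simple roots and coordinates -/

lemma pos_subset_span_simple : P.pos ⊆ (Submodule.span ℝ P.simple : Set V) := by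
  intro α hα
  obtain ⟨c, hsupp, hc⟩ := P.pos_eq_nat_combination α hα
  rw [hc, Finsupp.sum]
  exact Submodule.sum_mem _ fun β hβ =>
    Submodule.smul_mem _ _ (Submodule.subset_span (hsupp hβ))

lemma span_simple_eq_top : Submodule.span ℝ P.simple = ⊤ := by
  rw [← top_le_iff, ← P.span_roots, Submodule.span_le]
  intro x hx
  rcases P.root_pos_or_neg hx with h | h
  · exact P.pos_subset_span_simple h
  · have h2 := P.pos_subset_span_simple (P.mem_neg.mp h)
    simpa using Submodule.neg_mem _ h2

/-- The basis of simple roots. -/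
noncomputable def basis : Module.Basis P.simple ℝ V :=
  Module.Basis.mk P.simple_linearIndependent
    (by rw [Subtype.range_coe, P.span_simple_eq_top])

@[simp] lemma basis_apply (i : P.simple) : P.basis i = (i : V) :=
  Module.Basis.mk_apply _ _ _

lemma repr_simple (i : P.simple) : P.basis.repr (i : V) = Finsupp.single i 1 := by
  conv_lhs => rw [← P.basis_apply i]
  exact P.basis.repr_self i

lemma repr_simple_apply (i j : P.simple) :
    P.basis.repr (i : V) j = if i = j then 1 else 0 := by
  rw [P.repr_simple, Finsupp.single_apply]

lemma repr_coeff (c : V →₀ ℕ) (hsupp : (c.support : Set V) ⊆ P.simple) (i : P.simple) :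
    P.basis.repr (c.sum fun β n => (n : ℝ) • β) i = (c (i : V) : ℝ) := by
  classical
  rw [Finsupp.sum, map_sum, Finsupp.finset_sum_apply]
  have hterm : ∀ β ∈ c.support,
      (P.basis.repr ((c β : ℝ) • β)) i = if β = (i : V) then (c β : ℝ) else 0 := by
    intro β hβ
    have hβs : β ∈ P.simple := hsupp hβ
    have h2 : P.basis.repr β = Finsupp.single (⟨β, hβs⟩ : P.simple) 1 := P.repr_simple ⟨β, hβs⟩
    rw [map_smul, Finsupp.smul_apply, h2, Finsupp.single_apply]
    by_cases h : β = (i : V)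
    · rw [if_pos (Subtype.ext h), if_pos h, smul_eq_mul, mul_one]
    · rw [if_neg (fun hh => h (congrArg Subtype.val hh)), if_neg h, smul_eq_mul, mul_zero]
  rw [Finset.sum_congr rfl hterm, Finset.sum_ite_eq' c.support ((i : V)) (fun β => (c β : ℝ))]
  by_cases h : (i : V) ∈ c.support
  · rw [if_pos h]
  · rw [if_neg h, eq_comm, Nat.cast_eq_zero]
    exact Finsupp.notMem_support_iff.mp h

lemma repr_nonneg_of_pos {α : V} (hα : α ∈ P.pos) (i : P.simple) :
    0 ≤ P.basis.repr α i := by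
  obtain ⟨c, hs, hc⟩ := P.pos_eq_nat_combination α hα
  rw [hc, P.repr_coeff c hs]
  positivity

lemma repr_nonpos_of_neg {x : V} (hx : x ∈ P.neg) (i : P.simple) :
    P.basis.repr x i ≤ 0 := by
  have h := P.repr_nonneg_of_pos (P.mem_neg.mp hx) i
  rw [map_neg, Finsupp.neg_apply] at h
  linarith

lemma pos_of_root_repr_nonneg {x : V} (hx : x ∈ P.roots)
    (h : ∀ i, 0 ≤ P.basis.repr x i) : x ∈ P.pos := by
  rcases P.root_pos_or_neg hx with h1 | h1
  · exact h1
  · exfalso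
    apply P.root_ne_zero hx
    apply P.basis.repr.injective
    ext i
    have := P.repr_nonpos_of_neg h1 i
    have := h i
    simp only [map_zero, Finsupp.coe_zero, Pi.zero_apply]
    linarith

lemma neg_of_root_repr_nonpos {x : V} (hx : x ∈ P.roots)
    (h : ∀ i, P.basis.repr x i ≤ 0) : x ∈ P.neg := by
  rcases P.root_pos_or_neg hx with h1 | h1
  · exfalso
    apply P.root_ne_zero hx
    apply P.basis.repr.injective
    ext i
    have := P.repr_nonneg_of_pos h1 i
    have := h i
    simp only [map_zero, Finsupp.coe_zero, Pi.zero_apply]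
    linarith
  · exact h1

lemma repr_eq_zero_of_mem_span {J : Set V} (hJ : J ⊆ P.simple) {x : V}
    (hx : x ∈ Submodule.span ℝ J) (i : P.simple) (hi : (i : V) ∉ J) :
    P.basis.repr x i = 0 := by
  induction hx using Submodule.span_induction with
  | mem β hβ =>
    have hβs : β ∈ P.simple := hJ hβ
    rw [show β = ((⟨β, hβs⟩ : P.simple) : V) from rfl, P.repr_simple_apply]
    rw [if_neg]
    intro hh
    exact hi (hh ▸ hβ)
  | zero => simp
  | add y z _ _ hy hz => rw [map_add, Finsupp.add_apply, hy, hz, add_zero]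
  | smul a y _ hy => rw [map_smul, Finsupp.smul_apply, hy, smul_zero]

lemma mem_span_of_repr_eq_zero {J : Set V} {x : V}
    (h : ∀ i : P.simple, (i : V) ∉ J → P.basis.repr x i = 0) :
    x ∈ Submodule.span ℝ J := by
  have hx := P.basis.linearCombination_repr x
  rw [← hx, Finsupp.linearCombination_apply, Finsupp.sum]
  refine Submodule.sum_mem _ fun i hi => Submodule.smul_mem _ _ (Submodule.subset_span ?_)
  have hmem : (i : V) ∈ J := by
    by_contra hc
    exact (Finsupp.mem_support_iff.mp hi) (h i hc)
  rw [P.basis_apply]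
  exact hmem

lemma span_int_le {J : Set V} {x : V} (hx : x ∈ Submodule.span ℤ J) :
    x ∈ Submodule.span ℝ J := by
  have hle : Submodule.span ℤ J ≤ (Submodule.span ℝ J).restrictScalars ℤ :=
    Submodule.span_le.mpr fun y hy => Submodule.subset_span hy
  exact hle hx

lemma coeff_support_subset {J : Set V} (hJ : J ⊆ P.simple) {α : V}
    (hsp : α ∈ Submodule.span ℝ J)
    (c : V →₀ ℕ) (hs : (c.support : Set V) ⊆ P.simple)
    (hc : α = c.sum fun β n => (n : ℝ) • β) :
    (c.support : Set V) ⊆ J := by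
  intro β hβ
  by_contra hcon
  have hβs : β ∈ P.simple := hs hβ
  have h0 := P.repr_eq_zero_of_mem_span hJ hsp (⟨β, hβs⟩ : P.simple) hcon
  rw [hc, P.repr_coeff c hs] at h0
  exact (Finsupp.mem_support_iff.mp hβ) (by exact_mod_cast h0)

lemma mem_span_int_of_pos {J : Set V} (hJ : J ⊆ P.simple) {α : V} (hα : α ∈ P.pos)
    (hsp : α ∈ Submodule.span ℝ J) : α ∈ Submodule.span ℤ J := by
  obtain ⟨c, hs, hc⟩ := P.pos_eq_nat_combination α hα
  have hsupp := P.coeff_support_subset hJ hsp c hs hc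
  rw [hc, Finsupp.sum]
  refine Submodule.sum_mem _ fun β hβ => ?_
  have : ((c β : ℝ)) • β = ((c β : ℤ)) • β := by
    rw [← Int.cast_smul_eq_zsmul (R := ℝ)]
    norm_num
  rw [this]
  exact Submodule.smul_mem _ _ (Submodule.subset_span (hsupp hβ))

lemma posOf_eq_inter {J : Set V} (hJ : J ⊆ P.simple) :
    P.posOf J = {α ∈ P.pos | α ∈ Submodule.span ℝ J} := by
  ext x
  constructor
  · rintro ⟨h1, h2⟩
    exact ⟨h1, span_int_le h2⟩
  · rintro ⟨h1, h2⟩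
    exact ⟨h1, P.mem_span_int_of_pos hJ h1 h2⟩

lemma mem_negOf {J : Set V} {x : V} : x ∈ P.negOf J ↔ -x ∈ P.posOf J := Set.mem_neg

lemma negOf_eq_inter {J : Set V} (hJ : J ⊆ P.simple) :
    P.negOf J = {x ∈ P.neg | x ∈ Submodule.span ℝ J} := by
  ext x
  rw [P.mem_negOf, P.posOf_eq_inter hJ]
  constructor
  · rintro ⟨h1, h2⟩
    exact ⟨P.mem_neg.mpr h1, by simpa using Submodule.neg_mem _ h2⟩
  · rintro ⟨h1, h2⟩
    exact ⟨P.mem_neg.mp h1, Submodule.neg_mem _ h2⟩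

lemma negOf_subset_neg {J : Set V} (hJ : J ⊆ P.simple) : P.negOf J ⊆ P.neg := by
  rw [P.negOf_eq_inter hJ]
  exact fun x hx => hx.1

/-! ### Reflections -/

lemma srefl_apply {α : V} (hα : α ∈ P.roots) (x : V) :
    P.srefl α x = x - P.coroot α x • α := by
  rw [srefl, dif_pos hα]
  exact Module.reflection_apply x (P.coroot_self_eq_two α hα)

lemma srefl_apply_self {α : V} (hα : α ∈ P.roots) : P.srefl α α = -α := by
  rw [srefl, dif_pos hα]
  exact Module.reflection_apply_self (P.coroot_self_eq_two α hα)

lemma mul_apply (f g : V ≃ₗ[ℝ] V) (x : V) : (f * g) x = f (g x) := rfl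

lemma one_apply (x : V) : (1 : V ≃ₗ[ℝ] V) x = x := rfl

lemma inv_apply (f : V ≃ₗ[ℝ] V) (x : V) : f⁻¹ x = f.symm x := rfl

lemma apply_inv_apply (f : V ≃ₗ[ℝ] V) (x : V) : f (f⁻¹ x) = x :=
  f.apply_symm_apply x

lemma inv_apply_apply (f : V ≃ₗ[ℝ] V) (x : V) : f⁻¹ (f x) = x :=
  f.symm_apply_apply x

lemma srefl_mul_self (α : V) : P.srefl α * P.srefl α = 1 := by
  refine LinearEquiv.toLinearMap_injective (LinearMap.ext fun x => ?_)
  by_cases hα : α ∈ P.roots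
  · show P.srefl α (P.srefl α x) = x
    rw [srefl, dif_pos hα]
    exact Module.involutive_reflection (P.coroot_self_eq_two α hα) x
  · show P.srefl α (P.srefl α x) = x
    rw [srefl, dif_neg hα]
    rfl

lemma srefl_inv (α : V) : (P.srefl α)⁻¹ = P.srefl α :=
  inv_eq_of_mul_eq_one_right (P.srefl_mul_self α)

lemma srefl_root_mem {α β : V} (hβ : β ∈ P.roots) : P.srefl α β ∈ P.roots := by
  by_cases hα : α ∈ P.roots
  · rw [P.srefl_apply hα]
    exact P.reflect_mem α hα β hβ
  · rw [srefl, dif_neg hα]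
    exact hβ

/-- `w` maps roots to roots. -/
def MapsRoots (w : V ≃ₗ[ℝ] V) : Prop := ∀ β ∈ P.roots, w β ∈ P.roots

lemma mapsRoots_word (l : List V) : P.MapsRoots ((l.map P.srefl).prod) := by
  induction l with
  | nil => intro β hβ; simpa [one_apply] using hβ
  | cons a t ih =>
    intro β hβ
    rw [List.map_cons, List.prod_cons, mul_apply]
    exact P.srefl_root_mem (ih β hβ)

lemma prod_reverse_srefl (l : List V) :
    ((l.reverse.map P.srefl).prod) = ((l.map P.srefl).prod)⁻¹ := by
  induction l with
  | nil => simp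
  | cons a t ih =>
    rw [List.reverse_cons, List.map_append, List.prod_append, ih, List.map_cons,
      List.prod_cons, List.map_nil, List.prod_nil, mul_one, List.map_cons, List.prod_cons,
      mul_inv_rev, P.srefl_inv]

lemma exists_word_of_mem_closure {S : Set V} {w : V ≃ₗ[ℝ] V}
    (hw : w ∈ Subgroup.closure (P.srefl '' S)) :
    ∃ l : List V, (∀ α ∈ l, α ∈ S) ∧ w = (l.map P.srefl).prod := by
  induction hw using Subgroup.closure_induction with
  | mem x hx =>
    obtain ⟨α, hα, rfl⟩ := hx
    exact ⟨[α], by simpa using hα, by simp⟩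
  | one => exact ⟨[], by simp, by simp⟩
  | mul x y _ _ ihx ihy =>
    obtain ⟨l1, hl1, rfl⟩ := ihx
    obtain ⟨l2, hl2, rfl⟩ := ihy
    refine ⟨l1 ++ l2, ?_, by rw [List.map_append, List.prod_append]⟩
    intro α hα
    rcases List.mem_append.mp hα with h | h
    · exact hl1 α h
    · exact hl2 α h
  | inv x _ ih =>
    obtain ⟨l, hl, rfl⟩ := ih
    exact ⟨l.reverse, fun α hα => hl α (List.mem_reverse.mp hα), (P.prod_reverse_srefl l).symm⟩

lemma word_mem_closure {S : Set V} (l : List V) (hl : ∀ α ∈ l, α ∈ S) :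
    (l.map P.srefl).prod ∈ Subgroup.closure (P.srefl '' S) := by
  refine list_prod_mem fun x hx => ?_
  obtain ⟨α, hα, rfl⟩ := List.mem_map.mp hx
  exact Subgroup.subset_closure ⟨α, hl α hα, rfl⟩

lemma mapsRoots_of_mem_closure {S : Set V} {w : V ≃ₗ[ℝ] V}
    (hw : w ∈ Subgroup.closure (P.srefl '' S)) :
    P.MapsRoots w ∧ P.MapsRoots w⁻¹ := by
  obtain ⟨l, _, rfl⟩ := P.exists_word_of_mem_closure hw
  refine ⟨P.mapsRoots_word l, ?_⟩
  rw [← P.prod_reverse_srefl l]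
  exact P.mapsRoots_word l.reverse

lemma mapsRoots_of_mem_weyl {w : V ≃ₗ[ℝ] V} (hw : w ∈ P.weylGroup) :
    P.MapsRoots w ∧ P.MapsRoots w⁻¹ :=
  P.mapsRoots_of_mem_closure hw

/-! ### Uniqueness of coroots and consequences -/

lemma coroot_eq_of_forall {α : V} (hα : α ∈ P.roots) (f : Module.Dual ℝ V) (h2 : f α = 2)
    (hmem : ∀ β ∈ P.roots, β - f β • α ∈ P.roots) : P.coroot α = f := by
  refine Module.Dual.eq_of_preReflection_mapsTo P.finite_roots
    P.span_roots (P.coroot_self_eq_two α hα) ?_ h2 ?_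
  · intro β hβ
    rw [Module.preReflection_apply]
    exact P.reflect_mem α hα β hβ
  · intro β hβ
    rw [Module.preReflection_apply]
    exact hmem β hβ

lemma coroot_conj {w : V ≃ₗ[ℝ] V} (hw : P.MapsRoots w) (hw' : P.MapsRoots w⁻¹)
    {β : V} (hβ : β ∈ P.roots) (x : V) :
    P.coroot (w β) x = P.coroot β (w⁻¹ x) := by
  have hwβ : w β ∈ P.roots := hw β hβ
  have key : P.coroot (w β) = (P.coroot β).comp (w.symm : V →ₗ[ℝ] V) := by
    refine P.coroot_eq_of_forall hwβ _ ?_ ?_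
    · simp only [LinearMap.coe_comp, Function.comp_apply, LinearEquiv.coe_coe,
        LinearEquiv.symm_apply_apply]
      exact P.coroot_self_eq_two β hβ
    · intro γ hγ
      have hγ' : w.symm γ ∈ P.roots := hw' γ hγ
      have hmem := hw _ (P.reflect_mem β hβ _ hγ')
      have heq : w (w.symm γ - P.coroot β (w.symm γ) • β)
          = γ - ((P.coroot β).comp (w.symm : V →ₗ[ℝ] V)) γ • w β := by
        rw [map_sub, map_smul, LinearEquiv.apply_symm_apply]
        rfl
      rwa [heq] at hmem
  rw [key]
  rfl

lemma srefl_conj {w : V ≃ₗ[ℝ] V} (hw : P.MapsRoots w) (hw' : P.MapsRoots w⁻¹)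
    {β : V} (hβ : β ∈ P.roots) :
    P.srefl (w β) = w * P.srefl β * w⁻¹ := by
  have hwβ : w β ∈ P.roots := hw β hβ
  refine LinearEquiv.toLinearMap_injective (LinearMap.ext fun x => ?_)
  show P.srefl (w β) x = (w * P.srefl β * w⁻¹) x
  rw [mul_apply, mul_apply, P.srefl_apply hwβ, P.srefl_apply hβ,
    P.coroot_conj hw hw' hβ x, map_sub, map_smul, apply_inv_apply]

lemma srefl_smul {α : V} {c : ℝ} (hα : α ∈ P.roots) (hc : c ≠ 0)
    (hcα : c • α ∈ P.roots) : P.srefl (c • α) = P.srefl α := by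
  have hcor : P.coroot (c • α) = c⁻¹ • P.coroot α := by
    refine P.coroot_eq_of_forall hcα _ ?_ ?_
    · rw [LinearMap.smul_apply, map_smul, P.coroot_self_eq_two α hα]
      rw [smul_smul, inv_mul_cancel₀ hc, one_smul]
    · intro β hβ
      have heq : (c⁻¹ • P.coroot α) β • c • α = P.coroot α β • α := by
        rw [LinearMap.smul_apply, smul_eq_mul, smul_smul, mul_comm c⁻¹, mul_assoc,
          inv_mul_cancel₀ hc, mul_one]
      rw [heq]
      exact P.reflect_mem α hα β hβ
  refine LinearEquiv.toLinearMap_injective (LinearMap.ext fun x => ?_)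
  show P.srefl (c • α) x = P.srefl α x
  rw [P.srefl_apply hcα, P.srefl_apply hα, hcor]
  have heq : (c⁻¹ • P.coroot α) x • c • α = P.coroot α x • α := by
    rw [LinearMap.smul_apply, smul_eq_mul, smul_smul, mul_comm c⁻¹, mul_assoc,
      inv_mul_cancel₀ hc, mul_one]
  rw [heq]

/-! ### The key geometric lemma about simple reflections -/

lemma eq_smul_of_srefl_neg {α γ : V} (hα : α ∈ P.simple) (hγ : γ ∈ P.pos)
    (h : P.srefl α γ ∈ P.neg) : ∃ c : ℝ, c ≠ 0 ∧ γ = c • α := by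
  have hαr : α ∈ P.roots := P.simple_subset_roots hα
  set i0 : P.simple := ⟨α, hα⟩ with hi0
  have key : ∀ i : P.simple, i ≠ i0 → P.basis.repr γ i = 0 := by
    intro i hi
    have h1 : 0 ≤ P.basis.repr γ i := P.repr_nonneg_of_pos hγ i
    have h2 : P.basis.repr (P.srefl α γ) i ≤ 0 := P.repr_nonpos_of_neg h i
    have h3 : P.basis.repr (P.srefl α γ) i = P.basis.repr γ i := by
      rw [P.srefl_apply hαr, map_sub, map_smul, Finsupp.sub_apply, Finsupp.smul_apply]
      have hrα : P.basis.repr α i = 0 := by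
        have := P.repr_simple_apply i0 i
        rw [if_neg (fun hh => hi hh.symm)] at this
        exact this
      rw [hrα, smul_zero, sub_zero]
    linarith
  have hγ0 : γ ≠ 0 := P.root_ne_zero (P.pos_subset_roots hγ)
  refine ⟨P.basis.repr γ i0, ?_, ?_⟩
  · intro hz
    apply hγ0
    apply P.basis.repr.injective
    ext i
    by_cases hii : i = i0
    · subst hii; simpa using hz
    · simpa using key i hii
  · have hz : ∀ i, P.basis.repr (γ - P.basis.repr γ i0 • α) i = 0 := by
      intro i
      rw [map_sub, map_smul, Finsupp.sub_apply, Finsupp.smul_apply]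
      by_cases hii : i = i0
      · subst hii
        have := P.repr_simple_apply i0 i0
        rw [if_pos rfl] at this
        rw [this]
        simp
      · have h4 := P.repr_simple_apply i0 i
        rw [if_neg (fun hh => hii hh.symm)] at h4
        rw [h4, smul_zero, key i hii, sub_zero]
    have : γ - P.basis.repr γ i0 • α = 0 := by
      apply P.basis.repr.injective
      ext i
      simpa using hz i
    exact sub_eq_zero.mp this

/-! ### Length -/

lemma length_le (l : List V) (hl : ∀ α ∈ l, α ∈ P.simple) {w : V ≃ₗ[ℝ] V}
    (hw : w = (l.map P.srefl).prod) : P.length w ≤ l.length :=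
  Nat.sInf_le ⟨l, rfl, hl, hw⟩

lemma exists_reduced {w : V ≃ₗ[ℝ] V} (hw : w ∈ P.weylGroup) :
    ∃ l : List V, l.length = P.length w ∧ (∀ α ∈ l, α ∈ P.simple) ∧
      w = (l.map P.srefl).prod := by
  have hne : {n | ∃ l : List V, l.length = n ∧ (∀ α ∈ l, α ∈ P.simple) ∧
      w = (l.map P.srefl).prod}.Nonempty := by
    obtain ⟨l, hl, hprod⟩ := P.exists_word_of_mem_closure hw
    exact ⟨l.length, l, rfl, hl, hprod⟩
  exact Nat.sInf_mem hne

/-! ### The deletion lemma -/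

lemma deletion : ∀ l : List V, (∀ α ∈ l, α ∈ P.simple) → ∀ β ∈ P.simple,
    ((l.map P.srefl).prod) β ∈ P.neg →
    ∃ l' : List V, l'.length + 1 = l.length ∧ (∀ α ∈ l', α ∈ P.simple) ∧
      (l'.map P.srefl).prod = (l.map P.srefl).prod * P.srefl β := by
  intro l
  induction l with
  | nil =>
    intro _ β hβ hneg
    exact absurd (by simpa [one_apply] using hneg)
      (P.not_mem_neg_of_pos (P.simple_subset_pos hβ))
  | cons a t ih =>
    intro hl β hβ hneg
    have ha : a ∈ P.simple := hl a (List.mem_cons_self)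
    have hts : ∀ α ∈ t, α ∈ P.simple := fun α hα => hl α (List.mem_cons_of_mem a hα)
    set u : V ≃ₗ[ℝ] V := (t.map P.srefl).prod with hu
    have hβr : β ∈ P.roots := P.simple_subset_roots hβ
    have huβ : u β ∈ P.roots := P.mapsRoots_word t β hβr
    rw [List.map_cons, List.prod_cons, mul_apply] at hneg
    rcases P.root_pos_or_neg huβ with hpos | hneg'
    · -- the sign flips at the head
      obtain ⟨c, hc, hcα⟩ := P.eq_smul_of_srefl_neg ha hpos hneg
      have har : a ∈ P.roots := P.simple_subset_roots ha
      have huW : u ∈ Subgroup.closure (P.srefl '' P.simple) := P.word_mem_closure t hts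
      obtain ⟨hmu, hmu'⟩ := P.mapsRoots_of_mem_closure huW
      have hconj : P.srefl (u β) = u * P.srefl β * u⁻¹ := P.srefl_conj hmu hmu' hβr
      have hsa : P.srefl a = u * P.srefl β * u⁻¹ := by
        rw [← hconj, hcα]
        exact (P.srefl_smul har hc (hcα ▸ huβ)).symm
      refine ⟨t, by simp, hts, ?_⟩
      rw [List.map_cons, List.prod_cons, hsa]
      rw [mul_assoc (u * P.srefl β), inv_mul_cancel, mul_one, mul_assoc,
        P.srefl_mul_self, mul_one]
    · -- recurse into the tail
      obtain ⟨l', hlen, hl's, hp'⟩ := ih hts β hβ hneg'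
      refine ⟨a :: l', by simpa using hlen, ?_, ?_⟩
      · intro α hα
        rcases List.mem_cons.mp hα with h | h
        · exact h ▸ ha
        · exact hl's α h
      · rw [List.map_cons, List.prod_cons, hp', List.map_cons, List.prod_cons, mul_assoc]

lemma length_mul_srefl_lt {w : V ≃ₗ[ℝ] V} (hw : w ∈ P.weylGroup) {β : V}
    (hβ : β ∈ P.simple) (hneg : w β ∈ P.neg) :
    P.length (w * P.srefl β) < P.length w := by
  obtain ⟨l, hlen, hls, hprod⟩ := P.exists_reduced hw
  obtain ⟨l', hl', hl's, hp'⟩ := P.deletion l hls β hβ (by rw [← hprod]; exact hneg)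
  have hle := P.length_le l' hl's (by rw [hp', ← hprod])
  omega

lemma srefl_mem_closure {S : Set V} {β : V} (hβ : β ∈ S) :
    P.srefl β ∈ Subgroup.closure (P.srefl '' S) :=
  Subgroup.subset_closure ⟨β, hβ, rfl⟩

lemma length_lt_mul_srefl {w : V ≃ₗ[ℝ] V} (hw : w ∈ P.weylGroup) {β : V}
    (hβ : β ∈ P.simple) (hpos : w β ∈ P.pos) :
    P.length w < P.length (w * P.srefl β) := by
  have hβr : β ∈ P.roots := P.simple_subset_roots hβ
  have h1 : (w * P.srefl β) β ∈ P.neg := by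
    rw [mul_apply, P.srefl_apply_self hβr, map_neg]
    exact P.mem_neg.mpr (by simpa using hpos)
  have h2 := P.length_mul_srefl_lt (mul_mem hw (P.srefl_mem_closure hβ)) hβ h1
  rwa [mul_assoc, P.srefl_mul_self, mul_one] at h2

/-! ### Action of longest / minimal-coset elements on simple roots -/

lemma image_simple_neg_of_longest {S : Set V} (hS : S ⊆ P.simple) {w : V ≃ₗ[ℝ] V}
    (hw : P.IsLongestIn (Subgroup.closure (P.srefl '' S)) w) {α : V} (hα : α ∈ S) :
    w α ∈ P.neg := by
  have hαs : α ∈ P.simple := hS hα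
  have hαr : α ∈ P.roots := P.simple_subset_roots hαs
  have hwW : w ∈ P.weylGroup :=
    Subgroup.closure_mono (Set.image_mono hS) hw.1
  have hroot : w α ∈ P.roots := (P.mapsRoots_of_mem_weyl hwW).1 α hαr
  rcases P.root_pos_or_neg hroot with hpos | hneg
  · exfalso
    have h1 := P.length_lt_mul_srefl hwW hαs hpos
    have h2 := hw.2 _ (mul_mem hw.1 (P.srefl_mem_closure hα))
    omega
  · exact hneg

lemma image_simple_pos_of_minCoset {J : Set V} (hJ : J ⊆ P.simple) {w : V ≃ₗ[ℝ] V}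
    (hw : P.IsMinCosetRep J w) {α : V} (hα : α ∈ J) : w α ∈ P.pos := by
  have hαs : α ∈ P.simple := hJ hα
  have hαr : α ∈ P.roots := P.simple_subset_roots hαs
  have hroot : w α ∈ P.roots := (P.mapsRoots_of_mem_weyl hw.1).1 α hαr
  rcases P.root_pos_or_neg hroot with hpos | hneg
  · exact hpos
  · exfalso
    have h1 := P.length_mul_srefl_lt hw.1 hαs hneg
    have h2 := hw.2 _ (P.srefl_mem_closure hα)
    omega

/-! ### Cone lemmas -/

lemma image_pos_neg_of_simple_neg {w : V ≃ₗ[ℝ] V} (hw : P.MapsRoots w)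
    (h : ∀ α ∈ P.simple, w α ∈ P.neg) {β : V} (hβ : β ∈ P.pos) : w β ∈ P.neg := by
  have hroot : w β ∈ P.roots := hw β (P.pos_subset_roots hβ)
  refine P.neg_of_root_repr_nonpos hroot fun i => ?_
  obtain ⟨c, hs, hc⟩ := P.pos_eq_nat_combination β hβ
  have himg : w β = ∑ γ ∈ c.support, (c γ : ℝ) • w γ := by
    rw [hc, Finsupp.sum, map_sum]
    simp [map_smul]
  rw [himg, map_sum, Finsupp.finset_sum_apply]
  refine Finset.sum_nonpos fun γ hγ => ?_
  rw [map_smul, Finsupp.smul_apply, smul_eq_mul]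
  exact mul_nonpos_of_nonneg_of_nonpos (by positivity)
    (P.repr_nonpos_of_neg (h γ (hs hγ)) i)

lemma image_posOf_pos {J : Set V} (hJ : J ⊆ P.simple) {w : V ≃ₗ[ℝ] V} (hw : P.MapsRoots w)
    (h : ∀ α ∈ J, w α ∈ P.pos) {β : V} (hβ : β ∈ P.posOf J) : w β ∈ P.pos := by
  have hβp : β ∈ P.pos := hβ.1
  have hroot : w β ∈ P.roots := hw β (P.pos_subset_roots hβp)
  refine P.pos_of_root_repr_nonneg hroot fun i => ?_
  obtain ⟨c, hs, hc⟩ := P.pos_eq_nat_combination β hβp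
  have hsupp : (c.support : Set V) ⊆ J :=
    P.coeff_support_subset hJ (span_int_le hβ.2) c hs hc
  have himg : w β = ∑ γ ∈ c.support, (c γ : ℝ) • w γ := by
    rw [hc, Finsupp.sum, map_sum]
    simp [map_smul]
  rw [himg, map_sum, Finsupp.finset_sum_apply]
  refine Finset.sum_nonneg fun γ hγ => ?_
  rw [map_smul, Finsupp.smul_apply, smul_eq_mul]
  exact mul_nonneg (by positivity) (P.repr_nonneg_of_pos (h γ (hsupp hγ)) i)

/-! ### The parabolic subgroup and `Φ_J` -/

lemma word_sub_mem_span {J : Set V} : ∀ l : List V, (∀ α ∈ l, α ∈ J) → ∀ x : V,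
    ((l.map P.srefl).prod) x - x ∈ Submodule.span ℝ J := by
  intro l
  induction l with
  | nil => intro _ x; simpa [one_apply] using Submodule.zero_mem _
  | cons a t ih =>
    intro hl x
    have ha : a ∈ J := hl a (List.mem_cons_self)
    have hts : ∀ α ∈ t, α ∈ J := fun α hα => hl α (List.mem_cons_of_mem a hα)
    rw [List.map_cons, List.prod_cons, mul_apply]
    set u : V ≃ₗ[ℝ] V := (t.map P.srefl).prod with hu
    have hsplit : P.srefl a (u x) - x = (P.srefl a (u x) - u x) + (u x - x) := by abel
    rw [hsplit]
    refine Submodule.add_mem _ ?_ (ih hts x)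
    by_cases har : a ∈ P.roots
    · rw [P.srefl_apply har]
      have : u x - P.coroot a (u x) • a - u x = -(P.coroot a (u x) • a) := by abel
      rw [this]
      exact Submodule.neg_mem _ (Submodule.smul_mem _ _ (Submodule.subset_span ha))
    · rw [srefl, dif_neg har]
      simpa using Submodule.zero_mem _

lemma parab_sub_mem_span {J : Set V} {w : V ≃ₗ[ℝ] V} (hw : w ∈ P.parabolic J) (x : V) :
    w x - x ∈ Submodule.span ℝ J := by
  obtain ⟨l, hl, rfl⟩ := P.exists_word_of_mem_closure hw
  exact P.word_sub_mem_span l hl x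

lemma parabolic_le_weyl {J : Set V} (hJ : J ⊆ P.simple) : P.parabolic J ≤ P.weylGroup :=
  Subgroup.closure_mono (Set.image_mono hJ)

lemma parab_maps_outside {J : Set V} (hJ : J ⊆ P.simple) {w : V ≃ₗ[ℝ] V}
    (hw : w ∈ P.parabolic J) {β : V} (hβ : β ∈ P.pos)
    (hsp : β ∉ Submodule.span ℝ J) :
    w β ∈ P.pos ∧ w β ∉ Submodule.span ℝ J := by
  have hwW : w ∈ P.weylGroup := P.parabolic_le_weyl hJ hw
  have hroot : w β ∈ P.roots := (P.mapsRoots_of_mem_weyl hwW).1 β (P.pos_subset_roots hβ)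
  have hdiff : w β - β ∈ Submodule.span ℝ J := P.parab_sub_mem_span hw β
  have hspn : w β ∉ Submodule.span ℝ J := by
    intro h
    apply hsp
    have : β = w β - (w β - β) := by abel
    rw [this]
    exact Submodule.sub_mem _ h hdiff
  refine ⟨?_, hspn⟩
  rcases P.root_pos_or_neg hroot with hpos | hneg
  · exact hpos
  · exfalso
    apply hspn
    refine P.mem_span_of_repr_eq_zero fun i hi => ?_
    have h1 : P.basis.repr (w β) i - P.basis.repr β i = 0 := by
      have := P.repr_eq_zero_of_mem_span hJ hdiff i hi
      rwa [map_sub, Finsupp.sub_apply] at this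
    have h2 : 0 ≤ P.basis.repr β i := P.repr_nonneg_of_pos hβ i
    have h3 : P.basis.repr (w β) i ≤ 0 := P.repr_nonpos_of_neg hneg i
    linarith

lemma longest_parab_posOf {J : Set V} (hJ : J ⊆ P.simple) {w : V ≃ₗ[ℝ] V}
    (hw : P.IsLongestIn (P.parabolic J) w) {β : V} (hβ : β ∈ P.posOf J) :
    w β ∈ P.negOf J := by
  have hwW : w ∈ P.weylGroup := P.parabolic_le_weyl hJ hw.1
  have hβp : β ∈ P.pos := hβ.1
  have hroot : w β ∈ P.roots := (P.mapsRoots_of_mem_weyl hwW).1 β (P.pos_subset_roots hβp)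
  rw [P.negOf_eq_inter hJ]
  constructor
  · -- negativity
    refine P.neg_of_root_repr_nonpos hroot fun i => ?_
    obtain ⟨c, hs, hc⟩ := P.pos_eq_nat_combination β hβp
    have hsupp : (c.support : Set V) ⊆ J :=
      P.coeff_support_subset hJ (span_int_le hβ.2) c hs hc
    have himg : w β = ∑ γ ∈ c.support, (c γ : ℝ) • w γ := by
      rw [hc, Finsupp.sum, map_sum]
      simp [map_smul]
    rw [himg, map_sum, Finsupp.finset_sum_apply]
    refine Finset.sum_nonpos fun γ hγ => ?_
    rw [map_smul, Finsupp.smul_apply, smul_eq_mul]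
    refine mul_nonpos_of_nonneg_of_nonpos (by positivity) ?_
    exact P.repr_nonpos_of_neg (P.image_simple_neg_of_longest hJ hw (hsupp hγ)) i
  · -- membership in the span
    have hβsp : β ∈ Submodule.span ℝ J := span_int_le hβ.2
    have hdiff : w β - β ∈ Submodule.span ℝ J := P.parab_sub_mem_span hw.1 β
    have : w β = β + (w β - β) := by abel
    rw [this]
    exact Submodule.add_mem _ hβsp hdiff

/-! ### The two key characterisations -/

lemma w0_image_pos_iff {w : V ≃ₗ[ℝ] V} (hw : P.IsLongestIn P.weylGroup w)
    {γ : V} (hγ : γ ∈ P.roots) : w γ ∈ P.pos ↔ γ ∈ P.neg := by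
  have hmr := P.mapsRoots_of_mem_weyl hw.1
  have h1 : ∀ β ∈ P.pos, w β ∈ P.neg := fun β hβ =>
    P.image_pos_neg_of_simple_neg hmr.1
      (fun α hα => P.image_simple_neg_of_longest (le_refl P.simple) hw hα) hβ
  constructor
  · intro h
    rcases P.root_pos_or_neg hγ with hp | hn
    · exact absurd (h1 γ hp) (P.not_mem_neg_of_pos h)
    · exact hn
  · intro h
    have h2 : w (-γ) ∈ P.neg := h1 _ (P.mem_neg.mp h)
    rw [map_neg] at h2
    have := P.mem_neg.mp h2
    simpa using this

lemma w0J_image_neg_iff {J : Set V} (hJ : J ⊆ P.simple) {w : V ≃ₗ[ℝ] V}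
    (hw : P.IsLongestIn (P.parabolic J) w) {γ : V} (hγ : γ ∈ P.roots) :
    w γ ∈ P.neg ↔ γ ∈ P.posOf J ∪ (P.neg \ P.negOf J) := by
  have hwW : w ∈ P.weylGroup := P.parabolic_le_weyl hJ hw.1
  constructor
  · intro h
    rcases P.root_pos_or_neg hγ with hp | hn
    · -- γ positive: must lie in Φ_J
      by_cases hsp : γ ∈ Submodule.span ℝ J
      · exact Or.inl (by rw [P.posOf_eq_inter hJ]; exact ⟨hp, hsp⟩)
      · exact absurd h (P.not_mem_neg_of_pos (P.parab_maps_outside hJ hw.1 hp hsp).1)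
    · -- γ negative: must lie outside Φ_{-J}
      refine Or.inr ⟨hn, fun hnJ => ?_⟩
      have hpos : -γ ∈ P.posOf J := P.mem_negOf.mp hnJ
      have h2 : w (-γ) ∈ P.negOf J := P.longest_parab_posOf hJ hw hpos
      have h3 : w (-γ) ∈ P.neg := P.negOf_subset_neg hJ h2
      rw [map_neg] at h3
      have h4 : w γ ∈ P.pos := by
        have := P.mem_neg.mp h3
        simpa using this
      exact P.not_mem_neg_of_pos h4 h
  · intro h
    rcases h with h | h
    · exact P.negOf_subset_neg hJ (P.longest_parab_posOf hJ hw h)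
    · obtain ⟨hn, hnJ⟩ := h
      have hpos : -γ ∈ P.pos := P.mem_neg.mp hn
      have hsp : -γ ∉ Submodule.span ℝ J := by
        intro hsp
        apply hnJ
        rw [P.mem_negOf, P.posOf_eq_inter hJ]
        exact ⟨hpos, hsp⟩
      have h2 : w (-γ) ∈ P.pos := (P.parab_maps_outside hJ hw.1 hpos hsp).1
      rw [map_neg] at h2
      exact P.mem_neg.mpr h2

end BasedRootSystem

/-- With `w₂ = w₀·w_{0,J}·w₁⁻¹` and `ℓ(w₂) + ℓ(w₁) = ℓ(w₀·w_{0,J})`,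
one has `Φ₋ ∩ w₂⁻¹(Φ₊) = w₁(Φ₋ \\ Φ_{-J}) ∩ Φ₋`. -/
theorem stmt6 {V : Type*} [AddCommGroup V] [Module ℝ V] (P : BasedRootSystem V)
    (J : Set V) (hJ : J ⊆ P.simple)
    (w0 : V ≃ₗ[ℝ] V) (hw0 : P.IsLongestIn P.weylGroup w0)
    (w0J : V ≃ₗ[ℝ] V) (hw0J : P.IsLongestIn (P.parabolic J) w0J)
    (w1 : V ≃ₗ[ℝ] V) (hw1 : P.IsMinCosetRep J w1)
    (w2 : V ≃ₗ[ℝ] V) (hw2 : w2 = w0 * w0J * w1⁻¹)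
    (hlen : P.length w2 + P.length w1 = P.length (w0 * w0J)) :
    P.neg ∩ (⇑w2⁻¹ '' P.pos) = (⇑w1 '' (P.neg \ P.negOf J)) ∩ P.neg := by
  clear hlen
  have hmr1 := P.mapsRoots_of_mem_weyl hw1.1
  have hw0JW : w0J ∈ P.weylGroup := P.parabolic_le_weyl hJ hw0J.1
  have hmr0J := P.mapsRoots_of_mem_weyl hw0JW
  ext x
  simp only [Set.mem_inter_iff, Set.mem_image]
  constructor
  · rintro ⟨hxneg, y, hy, hxy⟩
    have hw2x : w2 x ∈ P.pos := by
      have hxy2 : w2 x = y := by rw [← hxy, BasedRootSystem.apply_inv_apply w2 y]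
      rwa [hxy2]
    have hxroot : x ∈ P.roots := P.neg_subset_roots hxneg
    set z := w1⁻¹ x with hz
    have hzroot : z ∈ P.roots := hmr1.2 x hxroot
    have hcomp : w2 x = w0 (w0J z) := by rw [hw2]; rfl
    have h0Jz : w0J z ∈ P.roots := hmr0J.1 z hzroot
    have h1 : w0J z ∈ P.neg := (P.w0_image_pos_iff hw0 h0Jz).mp (hcomp ▸ hw2x)
    have h2 := (P.w0J_image_neg_iff hJ hw0J hzroot).mp h1
    rcases h2 with h2 | h2
    · exfalso
      have hp : w1 z ∈ P.pos := P.image_posOf_pos hJ hmr1.1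
        (fun α hα => P.image_simple_pos_of_minCoset hJ hw1 hα) h2
      rw [hz, BasedRootSystem.apply_inv_apply w1 x] at hp
      exact P.not_mem_neg_of_pos hp hxneg
    · exact ⟨⟨z, h2, by rw [hz, BasedRootSystem.apply_inv_apply w1 x]⟩, hxneg⟩
  · rintro ⟨⟨z, hzmem, hzx⟩, hxneg⟩
    refine ⟨hxneg, w2 x, ?_, BasedRootSystem.inv_apply_apply w2 x⟩
    have hzroot : z ∈ P.roots := P.neg_subset_roots hzmem.1
    have hcomp : w2 x = w0 (w0J (w1⁻¹ x)) := by rw [hw2]; rfl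
    have hinv : w1⁻¹ x = z := by rw [← hzx, BasedRootSystem.inv_apply_apply]
    have h1 : w0J z ∈ P.neg := (P.w0J_image_neg_iff hJ hw0J hzroot).mpr (Or.inr hzmem)
    have h0Jz : w0J z ∈ P.roots := hmr0J.1 z hzroot
    rw [hcomp, hinv]
    exact (P.w0_image_pos_iff hw0 h0Jz).mpr h1
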